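/- Let m ≥ 3 and let w := [Y,Z]·Φ(X1⋯Xm) ∈ H^{⊗(m+2)} for Y, Z, X1, …, Xm ∈ H. Then L(w) = −m · S(C12(N(w))) in Sym^m(H). Equivalently, with 𝔰∘δ^alg given on cyclic words by L and with the (m+1)-st Morita trace given by Tr_{m+1} = (−1)^{m+1}·S∘C12 on H ⊗ (degree-(m+1) free Lie elements), this says 𝔰(δ^alg(N([Y,Z]Φ(X1⋯Xm)))) = (−1)^m · m · Tr_{m+1}(N([Y,Z]Φ(X1⋯Xm))); since such elements N([Y,Z]Φ(X1⋯Xm)) span the degree-(m+2) part of the Lie algebra 𝔩_g^+, this is the paper's theorem that 𝔰∘δ^alg = (−1)^m·m·Tr_{m+1} on (𝔩_g^+)_{(m+2)}. -/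

import Mathlib

noncomputable section

variable {H : Type*} [AddCommGroup H] [Module ℚ H]

/-- The pure tensor `X1 ⊗ ⋯ ⊗ Xk`, as the element `ι(X1)⋯ι(Xk)` of the
tensor algebra `T(H)`. -/
def word (l : List H) : TensorAlgebra ℚ H :=
  (l.map fun x => TensorAlgebra.ι ℚ x).prod

/-- The Dynkin map `Φ(X1 X2 ⋯ Xm) = [X1,[X2,[⋯,[X_{m−1},Xm]⋯]]]`, with
`[a,b] := ab − ba` the commutator in `T(H)` and `Φ(X1) = X1`.
In particular `dynkin [Y, Z] = [Y, Z] = YZ − ZY`. -/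
def dynkin : List H → TensorAlgebra ℚ H
  | [] => 0
  | [x] => TensorAlgebra.ι ℚ x
  | x :: y :: l =>
      TensorAlgebra.ι ℚ x * dynkin (y :: l) - dynkin (y :: l) * TensorAlgebra.ι ℚ x

variable {A : Type*} [CommRing A] [Algebra ℚ A]

/-- The monomial `X1 X2 ⋯ Xk` in the symmetric algebra `Sym(H)`, modelled by a
commutative `ℚ`-algebra `A` equipped with a linear map `σ : H → A`. -/
def symword (σ : H →ₗ[ℚ] A) (l : List H) : A := (l.map fun x => σ x).prod

/-- For a word `X1 X2 X3 ⋯ Xk` (`k ≥ 3`), the term `(X1·X3)·X2 X4 ⋯ Xk` of the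
cyclic sum defining `L`; the `i`-th summand of
`L(X1⋯Xk) = ∑_{i=1}^{k} (X_{i−1}·X_{i+1})·X_i X_{i+2}⋯X_k X_1⋯X_{i−2}` is exactly
this term evaluated on the rotation of the word starting at `X_{i−1}`. -/
def cycTerm (ω : H →ₗ[ℚ] H →ₗ[ℚ] ℚ) (σ : H →ₗ[ℚ] A) : List H → A
  | a :: b :: c :: l => (ω a c) • (σ b * symword σ l)
  | _ => 0

set_option linter.unusedSectionVars false
namespace KK

variable (ω : H →ₗ[ℚ] H →ₗ[ℚ] ℚ) (σ : H →ₗ[ℚ] A)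

lemma word_append (l₁ l₂ : List H) : word (l₁ ++ l₂) = word l₁ * word l₂ := by
  simp [word]

lemma omega_antisym (hω : ∀ x, ω x x = 0) (x y : H) : ω y x = - ω x y := by
  have h := hω (x + y)
  simp [map_add, hω] at h
  linarith

lemma symword_cons (x : H) (l : List H) : symword σ (x :: l) = σ x * symword σ l := by
  simp [symword]

lemma symword_append (l₁ l₂ : List H) :
    symword σ (l₁ ++ l₂) = symword σ l₁ * symword σ l₂ := by
  simp [symword]

lemma symword_perm {l₁ l₂ : List H} (h : l₁.Perm l₂) :
    symword σ l₁ = symword σ l₂ := (h.map _).prod_eq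

lemma symword_reverse (l : List H) : symword σ l.reverse = symword σ l :=
  symword_perm σ (List.reverse_perm l)

lemma symword_app_sing (l : List H) (x : H) :
    symword σ (l ++ [x]) = σ x * symword σ l := by
  rw [symword_append]; simp [symword, mul_comm]

/-- contraction of `h` with the first letter -/
def af (h : H) : List H → A
  | x :: t => ω h x • symword σ t
  | [] => 0

/-- contraction of `h` with the second letter -/
def tf (h : H) : List H → A
  | x :: y :: t => ω h y • (σ x * symword σ t)
  | _ => 0

def fa (h : H) : List H → A
  | x :: t => ω x h • symword σ t
  | [] => 0

def ft (h : H) : List H → A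
  | x :: y :: t => ω y h • (σ x * symword σ t)
  | _ => 0

/-- contraction of the last letter with `h` -/
def bf (h : H) (w : List H) : A := fa ω σ h w.reverse

/-- contraction of the second-to-last letter with `h` -/
def rf (h : H) (w : List H) : A := ft ω σ h w.reverse

lemma af_cons (h x : H) (t : List H) : af ω σ h (x :: t) = ω h x • symword σ t := rfl

lemma af_append (h x : H) {w : List H} (hw : w ≠ []) :
    af ω σ h (w ++ [x]) = σ x * af ω σ h w := by
  obtain ⟨y, t, rfl⟩ := List.exists_cons_of_ne_nil hw
  simp [af, symword_app_sing, mul_smul_comm]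

lemma tf_cons2 (h x y : H) (t : List H) :
    tf ω σ h (x :: y :: t) = ω h y • (σ x * symword σ t) := rfl

lemma tf_cons (h x : H) {w : List H} (hw : w ≠ []) :
    tf ω σ h (x :: w) = σ x * af ω σ h w := by
  obtain ⟨y, t, rfl⟩ := List.exists_cons_of_ne_nil hw
  simp [tf, af, mul_smul_comm]

lemma tf_append (h x : H) {w : List H} (hw : 2 ≤ w.length) :
    tf ω σ h (w ++ [x]) = σ x * tf ω σ h w := by
  obtain ⟨y, w', rfl⟩ := List.exists_cons_of_ne_nil (show w ≠ [] by rintro rfl; simp at hw)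
  obtain ⟨z, t, rfl⟩ := List.exists_cons_of_ne_nil (show w' ≠ [] by rintro rfl; simp at hw)
  simp [tf, symword_app_sing, mul_smul_comm, mul_left_comm]

lemma bf_append (h x : H) (w : List H) :
    bf ω σ h (w ++ [x]) = ω x h • symword σ w := by
  simp [bf, fa, List.reverse_append, symword_reverse]

lemma bf_cons (h x : H) {w : List H} (hw : w ≠ []) :
    bf ω σ h (x :: w) = σ x * bf ω σ h w := by
  obtain ⟨y, t, hyt⟩ := List.exists_cons_of_ne_nil
    (show w.reverse ≠ [] by simpa using hw)
  simp [bf, fa, List.reverse_cons, hyt, symword_app_sing, mul_smul_comm]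

lemma rf_append (h x : H) {w : List H} (hw : w ≠ []) :
    rf ω σ h (w ++ [x]) = σ x * bf ω σ h w := by
  obtain ⟨y, t, hyt⟩ := List.exists_cons_of_ne_nil
    (show w.reverse ≠ [] by simpa using hw)
  simp [rf, bf, ft, fa, List.reverse_append, hyt, mul_smul_comm]

lemma rf_cons (h x : H) {w : List H} (hw : 2 ≤ w.length) :
    rf ω σ h (x :: w) = σ x * rf ω σ h w := by
  have hrl : 2 ≤ w.reverse.length := by simpa using hw
  obtain ⟨y, w', hyw⟩ := List.exists_cons_of_ne_nil (show w.reverse ≠ [] by rintro h'; rw [h'] at hrl; simp at hrl)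
  obtain ⟨z, t, hzt⟩ := List.exists_cons_of_ne_nil
    (show w' ≠ [] by rintro rfl; rw [hyw] at hrl; simp at hrl)
  rw [hzt] at hyw
  simp [rf, ft, List.reverse_cons, hyw, symword_app_sing, mul_smul_comm, mul_left_comm]

lemma bf_val (h : H) {w : List H} {n : ℕ} (hlt : n < w.length) (hn : w.length = n + 1) :
    bf ω σ h w = ω w[n] h • symword σ (w.take n) := by
  have hd : w = w.take n ++ [w[n]] := by
    conv_lhs => rw [← List.take_append_drop n w]
    congr 1
    rw [List.drop_eq_getElem_cons hlt]
    congr 1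
    apply List.drop_eq_nil_of_le
    omega
  conv_lhs => rw [hd]
  rw [bf_append]

lemma rf_val (h : H) {w : List H} {n : ℕ} (hlt : n + 1 < w.length) (hn : w.length = n + 2) :
    rf ω σ h w = ω w[n] h • (σ w[n+1] * symword σ (w.take n)) := by
  have hd : w = (w.take n ++ [w[n]]) ++ [w[n+1]] := by
    conv_lhs => rw [← List.take_append_drop n w]
    rw [List.append_assoc]
    congr 1
    rw [List.drop_eq_getElem_cons (by omega), List.drop_eq_getElem_cons (by omega)]
    have : w.drop (n + 2) = [] := List.drop_eq_nil_of_le (by omega)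
    simp [this]
  conv_lhs => rw [hd]
  have hne : w.take n ++ [w[n]] ≠ [] := fun h' => by exact absurd (List.append_eq_nil_iff.mp h').2 (by simp)
  rw [rf_append ω σ h (w[n+1]) hne, bf_append]
  rw [mul_smul_comm]

/-- the value of `SC` on a word of length `≥ 2` -/
def scv : List H → A
  | x :: y :: t => ω x y • symword σ t
  | _ => 0

lemma rot_formula (a b : H) (w : List H) {j : ℕ} (hj : j ≤ w.length) :
    (a :: b :: w).rotate (j + 2) = w.drop j ++ a :: b :: w.take j := by
  have h1 : j + 2 = (j + 1) + 1 := rfl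
  rw [h1, List.rotate_cons_succ]
  simp only [List.cons_append]
  rw [List.rotate_cons_succ]
  rw [List.rotate_eq_drop_append_take (by simp; omega)]
  rw [List.drop_append_of_le_length (by simp; omega),
      List.drop_append_of_le_length hj,
      List.take_append_of_le_length (by simp; omega),
      List.take_append_of_le_length hj]
  simp

lemma interior_cyc_eq (Y Z : H) (w : List H) {j : ℕ} (hj : j + 3 ≤ w.length) :
    cycTerm ω σ (w.drop j ++ Y :: Z :: w.take j)
      = cycTerm ω σ (w.drop j ++ Z :: Y :: w.take j) := by
  rw [List.drop_eq_getElem_cons (show j < w.length by omega),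
      List.drop_eq_getElem_cons (show j + 1 < w.length by omega),
      List.drop_eq_getElem_cons (show j + 2 < w.length by omega)]
  simp only [List.cons_append, cycTerm]
  congr 2
  exact symword_perm σ (List.Perm.append_left _ (List.Perm.swap _ _ _)).symm |>.symm

lemma interior_scv_eq (Y Z : H) (w : List H) {j : ℕ} (hj : j + 2 ≤ w.length) :
    scv ω σ (w.drop j ++ Y :: Z :: w.take j)
      = scv ω σ (w.drop j ++ Z :: Y :: w.take j) := by
  rw [List.drop_eq_getElem_cons (show j < w.length by omega),
      List.drop_eq_getElem_cons (show j + 1 < w.length by omega)]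
  simp only [List.cons_append, scv]
  congr 1
  exact symword_perm σ (List.Perm.append_left _ (List.Perm.swap _ _ _)).symm |>.symm

lemma cyc_sum (a b c d e : H) (t : List H) :
    ∑ p ∈ Finset.range ((c :: d :: e :: t).length + 2),
        cycTerm ω σ ((a :: b :: c :: d :: e :: t).rotate p)
      = (∑ j ∈ Finset.range (t.length + 1),
          cycTerm ω σ ((c :: d :: e :: t).drop j ++ a :: b :: (c :: d :: e :: t).take j))
        + σ b * af ω σ a (c :: d :: e :: t) + σ a * tf ω σ b (c :: d :: e :: t)
        + σ b * rf ω σ a (c :: d :: e :: t) + σ a * bf ω σ b (c :: d :: e :: t) := by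
  set w := c :: d :: e :: t with hw
  have hlen : w.length = t.length + 3 := by simp [hw]
  have hlen2 : w.length + 2 = (t.length + 4) + 1 := by omega
  rw [hlen2, Finset.sum_range_succ']
  have h4 : t.length + 4 = (t.length + 3) + 1 := rfl
  rw [h4, Finset.sum_range_succ']
  have h3 : t.length + 3 = (t.length + 2) + 1 := rfl
  rw [h3, Finset.sum_range_succ]
  have h2 : t.length + 2 = (t.length + 1) + 1 := rfl
  rw [h2, Finset.sum_range_succ]
  -- interior
  have hint : ∀ j ∈ Finset.range (t.length + 1),
      cycTerm ω σ ((a :: b :: w).rotate (j + 1 + 1))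
        = cycTerm ω σ (w.drop j ++ a :: b :: w.take j) := by
    intro j hj
    rw [Finset.mem_range] at hj
    rw [show j + 1 + 1 = j + 2 from rfl, rot_formula a b w (by omega)]
  rw [Finset.sum_congr rfl hint]
  -- p = 0
  have hp0 : cycTerm ω σ ((a :: b :: w).rotate 0) = σ b * af ω σ a w := by
    rw [List.rotate_zero, hw]
    simp [cycTerm, af, mul_smul_comm]
  -- p = 1
  have hp1 : cycTerm ω σ ((a :: b :: w).rotate (0 + 1)) = σ a * tf ω σ b w := by
    rw [List.rotate_cons_succ, List.rotate_zero, hw]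
    simp [cycTerm, tf, symword_cons, symword_app_sing, mul_smul_comm, mul_left_comm]
  -- j = t.length + 1  (second-to-last)
  have hq1 : cycTerm ω σ ((a :: b :: w).rotate (t.length + 1 + 1 + 1))
      = σ b * rf ω σ a w := by
    rw [show t.length + 1 + 1 + 1 = (t.length + 1) + 2 from rfl,
        rot_formula a b w (by omega)]
    rw [List.drop_eq_getElem_cons (show t.length + 1 < w.length by omega),
        List.drop_eq_getElem_cons (show t.length + 2 < w.length by omega)]
    have hnil : w.drop (t.length + 3) = [] := List.drop_eq_nil_of_le (by omega)
    rw [hnil]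
    rw [rf_val ω σ a (show t.length + 1 + 1 < w.length by omega) (by omega)]
    simp only [List.cons_append, List.nil_append, cycTerm]
    rw [symword_cons]
    rw [mul_smul_comm]
    congr 1
    ring
  -- j = t.length + 2  (last)
  have hq2 : cycTerm ω σ ((a :: b :: w).rotate (t.length + 2 + 1 + 1))
      = σ a * bf ω σ b w := by
    rw [show t.length + 2 + 1 + 1 = (t.length + 2) + 2 from rfl,
        rot_formula a b w (by omega)]
    rw [List.drop_eq_getElem_cons (show t.length + 2 < w.length by omega)]
    have hnil : w.drop (t.length + 3) = [] := List.drop_eq_nil_of_le (by omega)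
    rw [hnil]
    rw [bf_val ω σ b (show t.length + 2 < w.length by omega) (by omega)]
    simp only [List.cons_append, List.nil_append, cycTerm]
    rw [mul_smul_comm]
  rw [hp0, hp1, hq1, hq2]
  ring

lemma scv_sum (a b c d e : H) (t : List H) :
    ∑ p ∈ Finset.range ((c :: d :: e :: t).length + 2),
        scv ω σ ((a :: b :: c :: d :: e :: t).rotate p)
      = (∑ j ∈ Finset.range (t.length + 2),
          scv ω σ ((c :: d :: e :: t).drop j ++ a :: b :: (c :: d :: e :: t).take j))
        + ω a b • symword σ (c :: d :: e :: t)
        + σ a * af ω σ b (c :: d :: e :: t) + σ b * bf ω σ a (c :: d :: e :: t) := by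
  set w := c :: d :: e :: t with hw
  have hlen : w.length = t.length + 3 := by simp [hw]
  have hlen2 : w.length + 2 = (t.length + 4) + 1 := by omega
  rw [hlen2, Finset.sum_range_succ']
  have h4 : t.length + 4 = (t.length + 3) + 1 := rfl
  rw [h4, Finset.sum_range_succ']
  have h3 : t.length + 3 = (t.length + 2) + 1 := rfl
  rw [h3, Finset.sum_range_succ]
  have hint : ∀ j ∈ Finset.range (t.length + 2),
      scv ω σ ((a :: b :: w).rotate (j + 1 + 1))
        = scv ω σ (w.drop j ++ a :: b :: w.take j) := by
    intro j hj
    rw [Finset.mem_range] at hj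
    rw [show j + 1 + 1 = j + 2 from rfl, rot_formula a b w (by omega)]
  rw [Finset.sum_congr rfl hint]
  have hp0 : scv ω σ ((a :: b :: w).rotate 0) = ω a b • symword σ w := by
    rw [List.rotate_zero]
    simp [scv]
  have hp1 : scv ω σ ((a :: b :: w).rotate (0 + 1)) = σ a * af ω σ b w := by
    rw [List.rotate_cons_succ, List.rotate_zero, hw]
    simp [scv, af, symword_cons, symword_app_sing, mul_smul_comm, mul_left_comm]
  have hq2 : scv ω σ ((a :: b :: w).rotate (t.length + 2 + 1 + 1))
      = σ b * bf ω σ a w := by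
    rw [show t.length + 2 + 1 + 1 = (t.length + 2) + 2 from rfl,
        rot_formula a b w (by omega)]
    rw [List.drop_eq_getElem_cons (show t.length + 2 < w.length by omega)]
    have hnil : w.drop (t.length + 3) = [] := List.drop_eq_nil_of_le (by omega)
    rw [hnil]
    rw [bf_val ω σ a (show t.length + 2 < w.length by omega) (by omega)]
    simp only [List.cons_append, List.nil_append, scv]
    rw [symword_cons, mul_smul_comm]
  rw [hp0, hp1, hq2]
  ring

section lists

variable {α : Type*} {M : Type*} [AddCommGroup M] [Module ℚ M]

lemma lsum_map_neg (L : List α) (f : α → M) :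
    (L.map fun a => -f a).sum = -(L.map f).sum := by
  induction L with
  | nil => simp
  | cons a L ih => simp [ih]; abel

lemma lsum_map_add (L : List α) (f g : α → M) :
    (L.map fun a => f a + g a).sum = (L.map f).sum + (L.map g).sum := by
  induction L with
  | nil => simp
  | cons a L ih => simp [ih]; abel

lemma lsum_map_sub (L : List α) (f g : α → M) :
    (L.map fun a => f a - g a).sum = (L.map f).sum - (L.map g).sum := by
  induction L with
  | nil => simp
  | cons a L ih => simp [ih]; abel

lemma lsum_map_smul (c : ℚ) (L : List α) (f : α → M) :
    (L.map fun a => c • f a).sum = c • (L.map f).sum := by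
  induction L with
  | nil => simp
  | cons a L ih => simp [ih]

end lists

/-- the expansion of `dynkin l` into signed words -/
def dexp : List H → List (ℚ × List H)
  | [] => []
  | [x] => [(1, [x])]
  | x :: y :: l =>
      ((dexp (y :: l)).map fun cw => (cw.1, x :: cw.2)) ++
      ((dexp (y :: l)).map fun cw => (-cw.1, cw.2 ++ [x]))

lemma dexp_len : ∀ (l : List H) (cw : ℚ × List H), cw ∈ dexp l → cw.2.length = l.length := by
  intro l
  induction l with
  | nil => simp [dexp]
  | cons x t ih =>
    rcases t with _ | ⟨y, s⟩
    · simp [dexp]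
    · intro cw hcw
      simp only [dexp, List.mem_append, List.mem_map] at hcw
      rcases hcw with ⟨⟨c, w⟩, hmem, rfl⟩ | ⟨⟨c, w⟩, hmem, rfl⟩ <;>
        simpa using ih _ hmem

lemma word_cons (x : H) (l : List H) : word (x :: l) = TensorAlgebra.ι ℚ x * word l := by
  simp [word]

lemma dynkin_eq : ∀ (l : List H), l ≠ [] →
    dynkin l = ((dexp l).map fun cw => cw.1 • word cw.2).sum := by
  intro l
  induction l with
  | nil => intro h; simp at h
  | cons x t ih =>
    rcases t with _ | ⟨y, s⟩
    · intro _
      simp [dynkin, dexp, word]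
    · intro _
      rw [dynkin, ih (by simp)]
      simp only [dexp, List.map_append, List.sum_append, List.map_map, Function.comp_def]
      rw [← List.sum_map_mul_left, ← List.sum_map_mul_right]
      simp only [neg_smul]
      rw [lsum_map_neg]
      rw [← lsum_map_sub, ← sub_eq_add_neg, ← lsum_map_sub]
      congr 1
      apply List.map_congr_left
      intro cw _
      have hx : word [x] = TensorAlgebra.ι ℚ x := by simp [word]
      rw [mul_smul_comm, smul_mul_assoc, ← word_cons, ← hx, ← word_append]

def esum {M : Type*} [AddCommMonoid M] [Module ℚ M] (l : List H) (f : List H → M) : M :=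
  ((dexp l).map fun cw => cw.1 • f cw.2).sum

lemma esum_congr {M : Type*} [AddCommMonoid M] [Module ℚ M] {l : List H} {f g : List H → M}
    (h : ∀ w : List H, w.length = l.length → f w = g w) : esum l f = esum l g := by
  unfold esum
  congr 1
  apply List.map_congr_left
  intro cw hcw
  rw [h _ (dexp_len l cw hcw)]

lemma esum_cons {M : Type*} [AddCommGroup M] [Module ℚ M] (x y : H) (s : List H)
    (f : List H → M) :
    esum (x :: y :: s) f
      = esum (y :: s) (fun w => f (x :: w)) - esum (y :: s) (fun w => f (w ++ [x])) := by
  unfold esum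
  simp only [dexp, List.map_append, List.sum_append, List.map_map, Function.comp_def, neg_smul]
  rw [lsum_map_neg, ← sub_eq_add_neg]

lemma esum_zero {M : Type*} [AddCommMonoid M] [Module ℚ M] (l : List H) :
    esum l (fun _ => (0 : M)) = 0 := by
  unfold esum; simp

lemma esum_add {M : Type*} [AddCommGroup M] [Module ℚ M] (l : List H) (f g : List H → M) :
    esum l (fun w => f w + g w) = esum l f + esum l g := by
  unfold esum
  simp only [smul_add]
  exact lsum_map_add (dexp l) (fun cw => cw.1 • f cw.2) (fun cw => cw.1 • g cw.2)

lemma esum_sub {M : Type*} [AddCommGroup M] [Module ℚ M] (l : List H) (f g : List H → M) :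
    esum l (fun w => f w - g w) = esum l f - esum l g := by
  unfold esum
  simp only [smul_sub]
  exact lsum_map_sub (dexp l) (fun cw => cw.1 • f cw.2) (fun cw => cw.1 • g cw.2)

lemma esum_smul {M : Type*} [AddCommGroup M] [Module ℚ M] (l : List H) (c : ℚ)
    (f : List H → M) :
    esum l (fun w => c • f w) = c • esum l f := by
  unfold esum
  have h : ∀ cw : ℚ × List H, cw.1 • (c • f cw.2) = c • (cw.1 • f cw.2) := fun cw =>
    smul_comm _ _ _
  simp only [h]
  rw [lsum_map_smul]

lemma esum_mul_left (l : List H) (a : A) (f : List H → A) :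
    esum l (fun w => a * f w) = a * esum l f := by
  unfold esum
  simp only [← mul_smul_comm]
  rw [List.sum_map_mul_left]

def Afun (h : H) : List H → A
  | [x, y] => ω h x • σ y - ω h y • σ x
  | x :: t => σ x * Afun h t
  | [] => 0

lemma Afun_pair (h x y : H) : Afun ω σ h [x, y] = ω h x • σ y - ω h y • σ x := rfl

lemma Afun_cons (h x y z : H) (t : List H) :
    Afun ω σ h (x :: y :: z :: t) = σ x * Afun ω σ h (y :: z :: t) := rfl

theorem esum_vals (hω : ∀ x, ω x x = 0) (h : H) :
    ∀ l : List H, 2 ≤ l.length →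
      esum l (symword σ) = 0 ∧
      esum l (af ω σ h) = ((-1 : ℚ) ^ l.length) • Afun ω σ h l ∧
      esum l (bf ω σ h) = Afun ω σ h l ∧
      esum l (tf ω σ h) = ((-1 : ℚ) ^ (l.length + 1) * ((l.length : ℚ) - 1)) • Afun ω σ h l ∧
      esum l (rf ω σ h) = (1 - (l.length : ℚ)) • Afun ω σ h l := by
  intro l
  induction l with
  | nil => intro h2; simp at h2
  | cons x t ih =>
    rcases t with _ | ⟨y, s⟩
    · intro h2; simp at h2
    rcases s with _ | ⟨z, s⟩
    · intro _
      have hd : dexp [x, y] = [(1, [x, y]), (-1, [y, x])] := by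
        simp [dexp]
      have hxy : (ω y) h = - (ω h) y := omega_antisym ω hω h y
      have hxx : (ω x) h = - (ω h) x := omega_antisym ω hω h x
      refine ⟨?_, ?_, ?_, ?_, ?_⟩ <;>
        · unfold esum
          rw [hd]
          simp [af, tf, bf, rf, fa, ft, Afun, symword, hxy, hxx]
          try ring
          try module
    · intro _
      obtain ⟨hS, hA, hB, hT, hR⟩ := ih (by simp)
      set u := y :: z :: s with hu
      have hul : u.length = s.length + 2 := by simp [hu]
      have hne : ∀ w : List H, w.length = u.length → w ≠ [] := by
        intro w hw
        rintro rfl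
        simp [hul] at hw
      have h2 : ∀ w : List H, w.length = u.length → 2 ≤ w.length := by
        intro w hw; omega
      have eS : esum (x :: u) (symword σ) = 0 := by
        rw [esum_cons]
        rw [esum_congr (fun w _ => symword_cons σ x w),
            esum_congr (fun w _ => symword_app_sing σ w x)]
        rw [esum_mul_left, hS]
        simp
      have eA : esum (x :: u) (af ω σ h)
          = ((-1 : ℚ) ^ (x :: u).length) • Afun ω σ h (x :: u) := by
        rw [esum_cons]
        rw [esum_congr (fun w _ => af_cons ω σ h x w),
            esum_congr (fun w hw => af_append ω σ h x (hne w hw))]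
        rw [esum_smul, esum_mul_left, hS, hA, Afun_cons]
        simp only [smul_zero, zero_sub, List.length_cons, mul_smul_comm, pow_succ]
        module
      have eB : esum (x :: u) (bf ω σ h) = Afun ω σ h (x :: u) := by
        rw [esum_cons]
        rw [esum_congr (fun w hw => bf_cons ω σ h x (hne w hw)),
            esum_congr (fun w _ => bf_append ω σ h x w)]
        rw [esum_mul_left, esum_smul, hS, hB, Afun_cons]
        simp [hu]
      have eT : esum (x :: u) (tf ω σ h)
          = ((-1 : ℚ) ^ ((x :: u).length + 1) * (((x :: u).length : ℚ) - 1))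
              • Afun ω σ h (x :: u) := by
        rw [esum_cons]
        rw [esum_congr (fun w hw => tf_cons ω σ h x (hne w hw)),
            esum_congr (fun w hw => tf_append ω σ h x (h2 w hw))]
        rw [esum_mul_left, esum_mul_left, hA, hT, Afun_cons]
        simp only [List.length_cons, hul, mul_smul_comm, pow_succ]
        push_cast
        module
      have eR : esum (x :: u) (rf ω σ h)
          = (1 - ((x :: u).length : ℚ)) • Afun ω σ h (x :: u) := by
        rw [esum_cons]
        rw [esum_congr (fun w hw => rf_cons ω σ h x (h2 w hw)),
            esum_congr (fun w hw => rf_append ω σ h x (hne w hw))]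
        rw [esum_mul_left, esum_mul_left, hR, hB, Afun_cons]
        simp only [List.length_cons, hul, mul_smul_comm]
        push_cast
        module
      exact ⟨eS, eA, eB, eT, eR⟩

end KK

open KK

/-- Theorem (Kawazumi–Kuno, on the Morita traces): for `m ≥ 3` and
`w := [Y,Z]·Φ(X1⋯Xm) ∈ H^{⊗(m+2)}`, one has `L(w) = −m · S(C12(N(w)))` in `Sym^m(H)`.
Here:
* `N : H^{⊗k} → H^{⊗k}` is the cyclic symmetrization
  `N(X1⋯Xk) = ∑_{p=0}^{k−1} X_{p+1}⋯X_k X_1⋯X_p` (sum of all rotations);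
* `SC = S∘C12` is the composite of the contraction
  `C12(X1X2X3⋯Xk) = (X1·X2)·X3⋯Xk` with the canonical projection
  `S : H^{⊗(k−2)} → Sym^{k−2}(H)`, so `SC(X1X2X3⋯Xk) = (X1·X2)·X3⋯Xk ∈ Sym^{k−2}(H)`;
* `L : H^{⊗k} → Sym^{k−2}(H)` is determined by
  `L(X1⋯Xk) = ∑_{i=1}^{k} (X_{i−1}·X_{i+1})·X_i X_{i+2}⋯X_k X_1⋯X_{i−2}`
  (indices cyclic mod `k`); here it is expressed as the sum of `cycTerm` over all
  rotations of the word.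
Since `𝔰∘δ^alg = L` on cyclic words and `Tr_{m+1} = (−1)^{m+1}·S∘C12`, this is the
identity `𝔰(δ^alg(N([Y,Z]Φ(X1⋯Xm)))) = (−1)^m·m·Tr_{m+1}(N([Y,Z]Φ(X1⋯Xm)))`. -/
theorem stmt12 (ω : H →ₗ[ℚ] H →ₗ[ℚ] ℚ) (hω : ∀ x, ω x x = 0)
    (σ : H →ₗ[ℚ] A) (Y Z : H)
    (N : TensorAlgebra ℚ H →ₗ[ℚ] TensorAlgebra ℚ H)
    (hN : ∀ l : List H, N (word l) = ∑ p ∈ Finset.range l.length, word (l.rotate p))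
    (SC : TensorAlgebra ℚ H →ₗ[ℚ] A)
    (hSC : ∀ (x y : H) (l : List H),
      SC (word (x :: y :: l)) = (ω x y) • symword σ l)
    (L : TensorAlgebra ℚ H →ₗ[ℚ] A)
    (hL : ∀ (a b c : H) (l : List H),
      L (word (a :: b :: c :: l)) =
        ∑ p ∈ Finset.range (l.length + 3), cycTerm ω σ ((a :: b :: c :: l).rotate p))
    (l : List H) (hl : 3 ≤ l.length) :
    L (dynkin [Y, Z] * dynkin l) =
      (-(l.length : ℚ)) • SC (N (dynkin [Y, Z] * dynkin l)) := by
  classical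
  -- `SC` on words of length ≥ 2 is `scv`
  have hscv : ∀ v : List H, 2 ≤ v.length → SC (word v) = scv ω σ v := by
    rintro (_ | ⟨a, _ | ⟨b, r⟩⟩) hv
    · simp at hv
    · simp at hv
    · exact hSC a b r
  -- Step A for L
  have keyL : ∀ w : List H, 3 ≤ w.length →
      L (word (Y :: Z :: w)) - L (word (Z :: Y :: w))
        = σ Z * (af ω σ Y w - tf ω σ Y w + rf ω σ Y w - bf ω σ Y w)
          - σ Y * (af ω σ Z w - tf ω σ Z w + rf ω σ Z w - bf ω σ Z w) := by
    rintro (_ | ⟨c, _ | ⟨d, _ | ⟨e, t⟩⟩⟩) hw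
    · simp at hw
    · simp at hw
    · simp at hw
    have hr : (d :: e :: t).length + 3 = (c :: d :: e :: t).length + 2 := by simp
    rw [hL Y Z c (d :: e :: t), hL Z Y c (d :: e :: t), hr]
    rw [cyc_sum ω σ Y Z c d e t, cyc_sum ω σ Z Y c d e t]
    have hI : (∑ j ∈ Finset.range (t.length + 1),
          cycTerm ω σ ((c :: d :: e :: t).drop j ++ Y :: Z :: (c :: d :: e :: t).take j))
        = ∑ j ∈ Finset.range (t.length + 1),
          cycTerm ω σ ((c :: d :: e :: t).drop j ++ Z :: Y :: (c :: d :: e :: t).take j) := by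
      refine Finset.sum_congr rfl fun j hj => ?_
      rw [Finset.mem_range] at hj
      exact interior_cyc_eq ω σ Y Z _ (by simp; omega)
    rw [hI]
    ring
  -- Step A for SC ∘ N
  have keySC : ∀ w : List H, 3 ≤ w.length →
      SC (N (word (Y :: Z :: w))) - SC (N (word (Z :: Y :: w)))
        = (2 * ω Y Z) • symword σ w
          + (σ Z * (bf ω σ Y w - af ω σ Y w) - σ Y * (bf ω σ Z w - af ω σ Z w)) := by
    rintro (_ | ⟨c, _ | ⟨d, _ | ⟨e, t⟩⟩⟩) hw
    · simp at hw
    · simp at hw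
    · simp at hw
    have hrot : ∀ a b : H,
        SC (N (word (a :: b :: c :: d :: e :: t)))
          = ∑ p ∈ Finset.range ((c :: d :: e :: t).length + 2),
              scv ω σ ((a :: b :: c :: d :: e :: t).rotate p) := by
      intro a b
      rw [hN (a :: b :: c :: d :: e :: t), map_sum]
      have hr : (a :: b :: c :: d :: e :: t).length = (c :: d :: e :: t).length + 2 := by
        simp
      rw [hr]
      refine Finset.sum_congr rfl fun p hp => ?_
      exact hscv _ (by rw [List.length_rotate]; simp)
    rw [hrot Y Z, hrot Z Y]
    rw [scv_sum ω σ Y Z c d e t, scv_sum ω σ Z Y c d e t]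
    have hI : (∑ j ∈ Finset.range (t.length + 2),
          scv ω σ ((c :: d :: e :: t).drop j ++ Y :: Z :: (c :: d :: e :: t).take j))
        = ∑ j ∈ Finset.range (t.length + 2),
          scv ω σ ((c :: d :: e :: t).drop j ++ Z :: Y :: (c :: d :: e :: t).take j) := by
      refine Finset.sum_congr rfl fun j hj => ?_
      rw [Finset.mem_range] at hj
      exact interior_scv_eq ω σ Y Z _ (by simp; omega)
    rw [hI, omega_antisym ω hω Y Z]
    simp only [neg_smul, Algebra.smul_def, map_mul, map_neg, map_ofNat, map_one]
    ring
  -- expansion of the product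
  have hlne : l ≠ [] := by rintro rfl; simp at hl
  have hYZ : dynkin ([Y, Z] : List H) = word [Y, Z] - word [Z, Y] := by
    simp [dynkin, word]
  have hprod : dynkin [Y, Z] * dynkin l
      = ((dexp l).map fun cw =>
          cw.1 • (word (Y :: Z :: cw.2) - word (Z :: Y :: cw.2))).sum := by
    rw [hYZ, dynkin_eq l hlne, sub_mul]
    rw [← List.sum_map_mul_left, ← List.sum_map_mul_left, ← lsum_map_sub]
    congr 1
    apply List.map_congr_left
    intro cw _
    rw [mul_smul_comm, mul_smul_comm, ← smul_sub, ← word_append, ← word_append]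
    rfl
  -- LHS as an esum
  have hLHS : L (dynkin [Y, Z] * dynkin l)
      = esum l (fun w => L (word (Y :: Z :: w)) - L (word (Z :: Y :: w))) := by
    rw [hprod, map_list_sum, List.map_map]
    unfold esum
    congr 1
    apply List.map_congr_left
    intro cw _
    simp [map_sub, map_smul]
  have hRHS : SC (N (dynkin [Y, Z] * dynkin l))
      = esum l (fun w => SC (N (word (Y :: Z :: w))) - SC (N (word (Z :: Y :: w)))) := by
    rw [hprod, map_list_sum, List.map_map]
    rw [map_list_sum, List.map_map]
    unfold esum
    congr 1
    apply List.map_congr_left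
    intro cw _
    simp [map_sub, map_smul]
  have hlen3 : ∀ w : List H, w.length = l.length → 3 ≤ w.length := fun w hw => hw ▸ hl
  obtain ⟨vSY, vAY, vBY, vTY, vRY⟩ := esum_vals ω σ hω Y l (by omega)
  obtain ⟨vSZ, vAZ, vBZ, vTZ, vRZ⟩ := esum_vals ω σ hω Z l (by omega)
  rw [hLHS, hRHS]
  rw [esum_congr (fun w hw => keyL w (hlen3 w hw)),
      esum_congr (fun w hw => keySC w (hlen3 w hw))]
  rw [esum_sub l (fun w => σ Z * _) (fun w => σ Y * _)]
  rw [esum_mul_left, esum_mul_left]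
  rw [esum_sub, esum_add, esum_sub, esum_sub, esum_add, esum_sub]
  rw [esum_add, esum_smul, esum_sub, esum_mul_left, esum_mul_left, esum_sub, esum_sub]
  rw [vSY, vAY, vBY, vTY, vRY, vAZ, vBZ, vTZ, vRZ]
  simp only [smul_zero, Algebra.smul_def, map_mul, map_sub, map_add, map_one, map_pow,
    map_neg, map_natCast]
  ring


end
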